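/- If in addition ∑_{k=1}^∞ α_k² < ∞, then the weighted disagreement series is summable: ∑_{k=1}^∞ α_k max_{j=1,…,n} ‖δ^j_k‖ < ∞. -/

import Mathlib

/-!
Write `x (k+1) = B k x k + p k`. The projection step moves the node at most twice as far as the
unprojected step from `v̂ = B k x k ∈ X`, and the gradient of a convex function is bounded near
the compact set `X` by the oscillation of the function, so `‖p k j‖ ≤ c α k`. Unrolling the
recursion through the transition matrices `Φ`, and using that column stochasticity changes
`∑ j, x k j` only by `∑ j, p k j`, gives
`max_j ‖δ^j_{k+1}‖ ≤ θ β^k ∑ ‖x 1 i‖ + n θ ∑_{1 ≤ s < k} β^(k-s) c α s + 2 c α k`.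
After multiplying by `α (k+1)`, the outer terms are summable by AM-GM against `∑ α²` and
`∑ β^(2k)`; in the middle one, `α (k+1) α s ≤ α s ^ 2` leaves the Cauchy product of `∑ α²` and
`∑ β^m`.
-/

open Finset Metric InnerProductSpace
open scoped Pointwise

section Gradient

variable {E : Type*} [NormedAddCommGroup E] [InnerProductSpace ℝ E] [CompleteSpace E]

lemma ConvexOn.inner_gradient_le_sub {f : E → ℝ} {G x : E} (hf : ConvexOn ℝ Set.univ f)
    (hG : HasGradientAt f G x) (y : E) : ⟪G, y - x⟫_ℝ ≤ f y - f x := by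
  have hφ : ConvexOn ℝ Set.univ fun t : ℝ => f (t • (y - x) + x) := by
    have h := hf.comp_affineMap (AffineMap.lineMap x y)
    rwa [Set.preimage_univ] at h
  have hline : HasDerivAt (fun t : ℝ => t • (y - x) + x) (y - x) 0 := by
    simpa using ((hasDerivAt_id (0 : ℝ)).smul_const (y - x)).add_const x
  have hd : HasDerivAt (fun t : ℝ => f (t • (y - x) + x)) ⟪G, y - x⟫_ℝ 0 := by
    have hG' : HasFDerivAt f (toDual ℝ E G) ((0 : ℝ) • (y - x) + x) := by
      simpa using hG.hasFDerivAt
    have h := hG'.comp_hasDerivAt (0 : ℝ) hline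
    rw [toDual_apply_apply] at h
    exact h
  simpa [slope_def_field] using
    hφ.le_slope_of_hasDerivAt (Set.mem_univ 0) (Set.mem_univ 1) one_pos hd

lemma ConvexOn.norm_gradient_le {f : E → ℝ} {G z : E} {M : ℝ} (hf : ConvexOn ℝ Set.univ f)
    (hG : HasGradientAt f G z) (hM : ∀ w ∈ closedBall z 1, |f w| ≤ M) : ‖G‖ ≤ 2 * M := by
  -- `u` is the unit vector along `G`, or `0` when `G = 0`; in both cases `⟪G, u⟫ = ‖G‖`.
  set u := ‖G‖⁻¹ • G
  have hu : z + u ∈ closedBall z 1 := by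
    rw [mem_closedBall, dist_self_add_left, norm_smul, norm_inv, norm_norm]
    exact inv_mul_le_one_of_le₀ le_rfl (norm_nonneg _)
  have hGu : ⟪G, u⟫_ℝ = ‖G‖ := by
    rw [real_inner_smul_right, real_inner_self_eq_norm_sq, sq, ← mul_assoc, inv_mul_mul_self]
  have hslope := hf.inner_gradient_le_sub hG (z + u)
  rw [add_sub_cancel_left, hGu] at hslope
  linarith [le_abs_self (f (z + u)), neg_abs_le (f z), hM _ hu,
    hM z (mem_closedBall_self zero_le_one)]

lemma exists_norm_gradient_le_of_isCompact [ProperSpace E] {ι : Type*} [Fintype ι]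
    {f : ι → E → ℝ} {g : ι → E → E} (hf : ∀ j, ConvexOn ℝ Set.univ (f j))
    (hg : ∀ j z, HasGradientAt (f j) (g j z) z) {S : Set E} (hS : IsCompact S) :
    ∃ C, 0 ≤ C ∧ ∀ j, ∀ z ∈ S, ‖g j z‖ ≤ C := by
  have hcont : Continuous fun w j => f j w := continuous_pi fun j =>
    continuous_iff_continuousAt.2 fun w => (hg j w).differentiableAt.continuousAt
  obtain ⟨M, hM⟩ :=
    (hS.add (isCompact_closedBall (0 : E) 1)).exists_bound_of_continuousOn hcont.continuousOn
  refine ⟨2 * max M 0, by positivity, fun j z hz =>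
    (hf j).norm_gradient_le (hg j z) fun w hw => ?_⟩
  have hw' : w ∈ S + closedBall (0 : E) 1 :=
    Set.mem_add.2 ⟨z, hz, w - z, by rwa [mem_closedBall_zero_iff, ← dist_eq_norm],
      add_sub_cancel z w⟩
  calc |f j w| = ‖(fun j => f j w) j‖ := (Real.norm_eq_abs _).symm
    _ ≤ ‖fun j => f j w‖ := norm_le_pi_norm (fun j => f j w) j
    _ ≤ max M 0 := (hM w hw').trans (le_max_left _ _)

end Gradient

lemma norm_nearest_sub_smul_sub_le {E : Type*} [SeminormedAddCommGroup E] [NormedSpace ℝ E]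
    {X : Set E} {P : E → E} (hP : ∀ z, ∀ y ∈ X, ‖z - P z‖ ≤ ‖z - y‖) {v : E} (hv : v ∈ X)
    {a : ℝ} (ha : 0 ≤ a) (w : E) : ‖P (v - a • w) - v‖ ≤ 2 * a * ‖w‖ := by
  have hz : ‖v - a • w - v‖ = a * ‖w‖ := by
    rw [sub_sub_cancel_left, norm_neg, norm_smul, Real.norm_of_nonneg ha]
  linarith [norm_sub_le_norm_sub_add_norm_sub (P (v - a • w)) (v - a • w) v,
    norm_sub_rev (P (v - a • w)) (v - a • w), hP (v - a • w) v hv]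

lemma Matrix.sum_smul_sum_smul {ι E : Type*} [Fintype ι] [AddCommMonoid E] [Module ℝ E]
    (A C : Matrix ι ι ℝ) (y : ι → E) (j : ι) :
    ∑ i, A j i • ∑ t, C i t • y t = ∑ t, (A * C) j t • y t := by
  simp_rw [Matrix.mul_apply, smul_sum, smul_smul, sum_smul]
  exact sum_comm

lemma norm_sum_smul_le_of_abs_le {ι E : Type*} [Fintype ι] [SeminormedAddCommGroup E]
    [NormedSpace ℝ E] {c : ι → ℝ} {ε : ℝ} (hc : ∀ i, |c i| ≤ ε) (y : ι → E) :
    ‖∑ i, c i • y i‖ ≤ ε * ∑ i, ‖y i‖ := by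
  rw [mul_sum]
  refine (norm_sum_le _ _).trans (sum_le_sum fun i _ => ?_)
  rw [norm_smul, Real.norm_eq_abs]
  exact mul_le_mul_of_nonneg_right (hc i) (norm_nonneg _)

lemma sum_norm_le_mul {E : Type*} [SeminormedAddCommGroup E] {n : ℕ} {y : Fin n → E} {a : ℝ}
    (hy : ∀ i, ‖y i‖ ≤ a) : ∑ i, ‖y i‖ ≤ n * a := by
  simpa using sum_le_card_nsmul univ (fun i => ‖y i‖) a fun i _ => hy i

section Consensus

variable {E : Type*} [NormedAddCommGroup E] [NormedSpace ℝ E] {n : ℕ}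
  {B : ℕ → Matrix (Fin n) (Fin n) ℝ} {Φ : ℕ → ℕ → Matrix (Fin n) (Fin n) ℝ}
  {x p : ℕ → Fin n → E}

lemma norm_inv_smul_sum_le {y : Fin n → E} {a : ℝ} (hy : ∀ i, ‖y i‖ ≤ a) (ha : 0 ≤ a) :
    ‖(n : ℝ)⁻¹ • ∑ i, y i‖ ≤ a := by
  rcases n.eq_zero_or_pos with rfl | hn
  · simpa using ha
  rw [norm_smul, Real.norm_of_nonneg (by positivity), inv_mul_le_iff₀ (by positivity)]
  exact (norm_sum_le _ _).trans (sum_norm_le_mul hy)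

lemma eq_sum_transition_smul
    (hstep : ∀ k, 1 ≤ k → ∀ j, x (k + 1) j = ∑ i, B k j i • x k i + p k j)
    (hΦdiag : ∀ s, 1 ≤ s → Φ s s = B s)
    (hΦrec : ∀ k s, 1 ≤ s → s ≤ k → Φ (k + 1) s = B (k + 1) * Φ k s) {k : ℕ} (hk : 1 ≤ k)
    (j : Fin n) :
    x (k + 1) j =
      ∑ i, Φ k 1 j i • x 1 i + ∑ s ∈ Ico 1 k, ∑ i, Φ k (s + 1) j i • p s i + p k j := by
  induction k, hk using Nat.le_induction generalizing j with
  | base => simp [hstep 1 le_rfl, hΦdiag 1 le_rfl]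
  | succ m hm ih =>
    have hmix : ∀ s ∈ Ico 1 m, ∑ i, B (m + 1) j i • ∑ t, Φ m (s + 1) i t • p s t =
        ∑ t, Φ (m + 1) (s + 1) j t • p s t := fun s hs => by
      rw [mem_Ico] at hs
      rw [Matrix.sum_smul_sum_smul, hΦrec m (s + 1) (by omega) (by omega)]
    rw [hstep (m + 1) (by omega), sum_Ico_succ_top hm, hΦdiag (m + 1) (by omega),
      hΦrec m 1 le_rfl hm, ← Matrix.sum_smul_sum_smul, ← sum_congr rfl hmix]
    simp_rw [ih, smul_add, sum_add_distrib, smul_sum]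
    rw [sum_comm (s := univ) (t := Ico 1 m)]
    abel

lemma sum_eq_sum_add_sum_sum
    (hstep : ∀ k, 1 ≤ k → ∀ j, x (k + 1) j = ∑ i, B k j i • x k i + p k j)
    (hBcol : ∀ k j, 1 ≤ k → ∑ i, B k i j = 1) {k : ℕ} (hk : 1 ≤ k) :
    ∑ j, x (k + 1) j = ∑ j, x 1 j + ∑ s ∈ Ico 1 (k + 1), ∑ j, p s j := by
  have hsucc : ∀ k, 1 ≤ k → ∑ j, x (k + 1) j = ∑ j, x k j + ∑ j, p k j := fun k hk => by
    rw [sum_congr rfl fun j _ => hstep k hk j, sum_add_distrib, sum_comm]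
    simp_rw [← sum_smul, hBcol k _ hk, one_smul]
  induction k, hk using Nat.le_induction with
  | base => simp [hsucc 1 le_rfl]
  | succ m hm ih =>
    rw [hsucc (m + 1) (by omega), ih, sum_Ico_succ_top (by omega : 1 ≤ m + 1), add_assoc]

lemma sub_inv_smul_sum_eq
    (hstep : ∀ k, 1 ≤ k → ∀ j, x (k + 1) j = ∑ i, B k j i • x k i + p k j)
    (hΦdiag : ∀ s, 1 ≤ s → Φ s s = B s)
    (hΦrec : ∀ k s, 1 ≤ s → s ≤ k → Φ (k + 1) s = B (k + 1) * Φ k s)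
    (hBcol : ∀ k j, 1 ≤ k → ∑ i, B k i j = 1) {k : ℕ} (hk : 1 ≤ k) (j : Fin n) :
    x (k + 1) j - (n : ℝ)⁻¹ • ∑ i, x (k + 1) i =
      ∑ i, (Φ k 1 j i - (n : ℝ)⁻¹) • x 1 i +
        ∑ s ∈ Ico 1 k, ∑ i, (Φ k (s + 1) j i - (n : ℝ)⁻¹) • p s i +
        (p k j - (n : ℝ)⁻¹ • ∑ i, p k i) := by
  rw [eq_sum_transition_smul hstep hΦdiag hΦrec hk, sum_eq_sum_add_sum_sum hstep hBcol hk,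
    sum_Ico_succ_top hk]
  simp only [sub_smul, sum_sub_distrib, smul_add, smul_sum]
  abel

lemma iSup_norm_sub_inv_smul_sum_le
    (hstep : ∀ k, 1 ≤ k → ∀ j, x (k + 1) j = ∑ i, B k j i • x k i + p k j)
    (hΦdiag : ∀ s, 1 ≤ s → Φ s s = B s)
    (hΦrec : ∀ k s, 1 ≤ s → s ≤ k → Φ (k + 1) s = B (k + 1) * Φ k s)
    (hBcol : ∀ k j, 1 ≤ k → ∑ i, B k i j = 1) {θ β : ℝ} (hθ : 0 ≤ θ) (hβ : 0 ≤ β)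
    (hΦbound : ∀ k s i j, 1 ≤ s → s ≤ k → |Φ k s i j - 1 / n| ≤ θ * β ^ (k - s + 1))
    {a : ℕ → ℝ} (ha : ∀ s, 1 ≤ s → 0 ≤ a s) (hp : ∀ s, 1 ≤ s → ∀ j, ‖p s j‖ ≤ a s)
    {k : ℕ} (hk : 1 ≤ k) :
    ⨆ j, ‖x (k + 1) j - (n : ℝ)⁻¹ • ∑ i, x (k + 1) i‖ ≤
      θ * β ^ k * ∑ i, ‖x 1 i‖ + n * θ * ∑ s ∈ Ico 1 k, β ^ (k - s) * a s + 2 * a k := by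
  have hΦ : ∀ s i j, s < k → |Φ k (s + 1) i j - (n : ℝ)⁻¹| ≤ θ * β ^ (k - s) :=
    fun s i j hs => by
      simpa [← one_div, show k - (s + 1) + 1 = k - s by omega] using
        hΦbound k (s + 1) i j (by omega) hs
  have hmid : ∀ j, ‖∑ s ∈ Ico 1 k, ∑ i, (Φ k (s + 1) j i - (n : ℝ)⁻¹) • p s i‖ ≤
      n * θ * ∑ s ∈ Ico 1 k, β ^ (k - s) * a s := fun j => by
    rw [mul_sum]
    refine (norm_sum_le _ _).trans (sum_le_sum fun s hs => ?_)
    rw [mem_Ico] at hs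
    calc _ ≤ θ * β ^ (k - s) * ∑ i, ‖p s i‖ :=
          norm_sum_smul_le_of_abs_le (fun i => hΦ s j i hs.2) _
      _ ≤ θ * β ^ (k - s) * (n * a s) := by gcongr; exact sum_norm_le_mul (hp s hs.1)
      _ = n * θ * (β ^ (k - s) * a s) := by ring
  have hsum : 0 ≤ ∑ s ∈ Ico 1 k, β ^ (k - s) * a s :=
    sum_nonneg fun s hs => mul_nonneg (pow_nonneg hβ _) (ha s (mem_Ico.1 hs).1)
  refine Real.iSup_le (fun j => ?_) (by have := ha k hk; positivity)
  rw [sub_inv_smul_sum_eq hstep hΦdiag hΦrec hBcol hk]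
  refine norm_add₃_le.trans (add_le_add (add_le_add ?_ (hmid j)) ?_)
  · simpa using norm_sum_smul_le_of_abs_le (fun i => hΦ 0 j i (by omega)) (x 1)
  · linarith [norm_sub_le (p k j) ((n : ℝ)⁻¹ • ∑ i, p k i), hp k hk j,
      norm_inv_smul_sum_le (hp k hk) (ha k hk)]

end Consensus

section Summation

lemma Summable.mul_of_summable_sq {ι : Type*} {u v : ι → ℝ} (hu : Summable fun k => u k ^ 2)
    (hv : Summable fun k => v k ^ 2) : Summable fun k => u k * v k :=
  ((hu.add hv).div_const 2).of_norm_bounded fun k => by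
    rw [Real.norm_eq_abs, abs_mul]
    nlinarith [sq_abs (u k), sq_abs (v k), sq_nonneg (|u k| - |v k|)]

variable {α : ℕ → ℝ} {β : ℝ}

lemma summable_mul_sum_geometric_mul (hαpos : ∀ k, 1 ≤ k → 0 < α k)
    (hα : AntitoneOn α {k | 1 ≤ k}) (hαsq : Summable fun k => α k ^ 2) (hβ0 : 0 ≤ β)
    (hβ1 : β < 1) :
    Summable fun k => α (k + 1) * ∑ s ∈ Ico 1 k, β ^ (k - s) * α s := by
  have hconv : Summable fun k => ∑ s ∈ range (k + 1), α s ^ 2 * β ^ (k - s) :=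
    summable_sum_mul_range_of_summable_mul <| hαsq.mul_of_nonneg
      (summable_geometric_of_lt_one hβ0 hβ1) (fun _ => sq_nonneg _) fun _ => pow_nonneg hβ0 _
  refine hconv.of_nonneg_of_le (fun k => ?_) fun k => ?_
  · exact mul_nonneg (hαpos _ (by omega)).le <| sum_nonneg fun s hs =>
      mul_nonneg (pow_nonneg hβ0 _) (hαpos s (mem_Ico.1 hs).1).le
  rw [mul_sum]
  refine (sum_le_sum fun s hs => ?_).trans <| sum_le_sum_of_subset_of_nonneg
    (fun s hs => by simp only [mem_Ico, mem_range] at hs ⊢; omega)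
    fun s _ _ => mul_nonneg (sq_nonneg _) (pow_nonneg hβ0 _)
  rw [mem_Ico] at hs
  have hle : α (k + 1) ≤ α s := hα hs.1 (show 1 ≤ k + 1 by omega) (by omega)
  have := hαpos s hs.1
  have := pow_nonneg hβ0 (k - s)
  calc α (k + 1) * (β ^ (k - s) * α s) ≤ α s * (β ^ (k - s) * α s) := by gcongr
    _ = α s ^ 2 * β ^ (k - s) := by ring

lemma summable_mul_geometric_add_sum_geometric_mul (hαpos : ∀ k, 1 ≤ k → 0 < α k)
    (hα : AntitoneOn α {k | 1 ≤ k}) (hαsq : Summable fun k => α k ^ 2) (hβ0 : 0 ≤ β)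
    (hβ1 : β < 1) (C₀ C₁ c : ℝ) :
    Summable fun k => α (k + 1) *
      (C₀ * β ^ k + C₁ * ∑ s ∈ Ico 1 k, β ^ (k - s) * (c * α s) + 2 * (c * α k)) := by
  have hαsq' : Summable fun k => α (k + 1) ^ 2 := (summable_nat_add_iff 1).mpr hαsq
  have hgeom : Summable fun k => (β ^ k) ^ 2 := by
    convert summable_geometric_of_lt_one (sq_nonneg β) (by nlinarith) using 2 with k
    ring
  refine (((hαsq'.mul_of_summable_sq hgeom).mul_left C₀).add
    ((summable_mul_sum_geometric_mul hαpos hα hαsq hβ0 hβ1).mul_left (C₁ * c))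
    |>.add ((hαsq'.mul_of_summable_sq hαsq).mul_left (2 * c))).congr fun k => ?_
  simp_rw [mul_left_comm _ c, ← mul_sum]
  ring

end Summation

theorem stmt_17_general
    (n D : ℕ)
    (Δ : ℝ) (hΔ : 0 ≤ Δ)
    (X : Set (EuclideanSpace ℝ (Fin D)))
    (hXcompact : IsCompact X) (hXconvex : Convex ℝ X)
    (P : EuclideanSpace ℝ (Fin D) → EuclideanSpace ℝ (Fin D))
    (hP : ∀ z, P z ∈ X ∧ ∀ y ∈ X, ‖z - P z‖ ≤ ‖z - y‖)
    (f : Fin n → EuclideanSpace ℝ (Fin D) → ℝ)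
    (g : Fin n → EuclideanSpace ℝ (Fin D) → EuclideanSpace ℝ (Fin D))
    (hfconv : ∀ j, ConvexOn ℝ Set.univ (f j))
    (hfgrad : ∀ j z, HasGradientAt (f j) (g j z) z)
    (α : ℕ → ℝ) (hαpos : ∀ k, 1 ≤ k → 0 < α k)
    (hαmono : ∀ k, 1 ≤ k → α (k + 1) ≤ α k)
    (B : ℕ → Matrix (Fin n) (Fin n) ℝ)
    (hBnn : ∀ k i j, 1 ≤ k → 0 ≤ B k i j)
    (hBrow : ∀ k i, 1 ≤ k → ∑ j, B k i j = 1)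
    (hBcol : ∀ k j, 1 ≤ k → ∑ i, B k i j = 1)
    (Φ : ℕ → ℕ → Matrix (Fin n) (Fin n) ℝ)
    (hΦdiag : ∀ s, 1 ≤ s → Φ s s = B s)
    (hΦrec : ∀ k s, 1 ≤ s → s ≤ k → Φ (k + 1) s = B (k + 1) * Φ k s)
    (θ β : ℝ) (hθ : 0 < θ) (hβ0 : 0 < β) (hβ1 : β < 1)
    (hΦbound : ∀ k s i j, 1 ≤ s → s ≤ k →
      |Φ k s i j - 1 / n| ≤ θ * β ^ (k - s + 1))
    (e : ℕ → Fin n → EuclideanSpace ℝ (Fin D))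
    (hebound : ∀ k j, 1 ≤ k → ‖e k j‖ ≤ Δ)
    (x : ℕ → Fin n → EuclideanSpace ℝ (Fin D))
    (hx1 : ∀ j, x 1 j ∈ X)
    (hupdate : ∀ k j, 1 ≤ k →
      x (k + 1) j = P ((∑ i, B k j i • x k i) -
        α k • (g j ((∑ i, B k j i • x k i) + α k • e k j) - e k j)))
    (hαsq : Summable fun k => α (k + 1) ^ 2)
    : Summable fun k =>
        α (k + 1) * ⨆ j, ‖x (k + 1) j - (n : ℝ)⁻¹ • ∑ i, x (k + 1) i‖ := by
  have hα : AntitoneOn α {k | 1 ≤ k} := antitoneOn_nat_Ici_of_succ_le hαmono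
  have hxX : ∀ k, 1 ≤ k → ∀ j, x k j ∈ X := fun k hk => by
    induction k, hk using Nat.le_induction with
    | base => exact hx1
    | succ k hk _ => exact fun j => hupdate k j hk ▸ (hP _).1
  obtain ⟨G, hG0, hG⟩ := exists_norm_gradient_le_of_isCompact hfconv hfgrad
    (hXcompact.add (isCompact_closedBall 0 (α 1 * Δ)))
  have hstep : ∀ k, 1 ≤ k → ∀ j,
      ‖x (k + 1) j - ∑ i, B k j i • x k i‖ ≤ 2 * (G + Δ) * α k := by
    intro k hk j
    have hv : ∑ i, B k j i • x k i ∈ X :=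
      hXconvex.sum_mem (fun i _ => hBnn k j i hk) (hBrow k j hk) fun i _ => hxX k hk i
    have he : ‖α k • e k j‖ ≤ α 1 * Δ := by
      rw [norm_smul, Real.norm_of_nonneg (hαpos k hk).le]
      exact mul_le_mul (hα (le_refl 1) hk hk) (hebound k j hk) (norm_nonneg _)
        (hαpos 1 le_rfl).le
    have hgv := hG j _ (Set.add_mem_add hv (mem_closedBall_zero_iff.2 he))
    rw [hupdate k j hk]
    refine (norm_nearest_sub_smul_sub_le (fun z => (hP z).2) hv (hαpos k hk).le _).trans ?_
    nlinarith [norm_sub_le (g j (∑ i, B k j i • x k i + α k • e k j)) (e k j),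
      hebound k j hk, hαpos k hk]
  refine (summable_mul_geometric_add_sum_geometric_mul hαpos hα
    ((summable_nat_add_iff 1).mp hαsq) hβ0.le hβ1 (θ * ∑ i, ‖x 1 i‖) (n * θ)
    (2 * (G + Δ))).of_norm_bounded_eventually_nat ?_
  filter_upwards [Filter.eventually_ge_atTop 1] with k hk
  have hαk := hαpos (k + 1) (by omega)
  rw [Real.norm_of_nonneg (mul_nonneg hαk.le (Real.iSup_nonneg fun j => norm_nonneg _))]
  refine mul_le_mul_of_nonneg_left ?_ hαk.le
  refine (iSup_norm_sub_inv_smul_sum_le (p := fun k j => x (k + 1) j - ∑ i, B k j i • x k i)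
    (fun k _ j => (add_sub_cancel _ _).symm) hΦdiag hΦrec hBcol hθ.le hβ0.le hΦbound
    (fun s hs => by have := hαpos s hs; positivity) hstep hk).trans_eq ?_
  ring

/-- Summability of the weighted disagreement series when ∑ α_k² < ∞. -/
theorem stmt_17
    (n D : ℕ) (hn : 1 ≤ n) (hD : 1 ≤ D)
    (L N Δ : ℝ) (hL : 0 ≤ L) (hN : 0 ≤ N) (hΔ : 0 ≤ Δ)
    (X : Set (EuclideanSpace ℝ (Fin D)))
    (hXne : X.Nonempty) (hXcompact : IsCompact X) (hXconvex : Convex ℝ X)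
    (P : EuclideanSpace ℝ (Fin D) → EuclideanSpace ℝ (Fin D))
    (hP : ∀ z, P z ∈ X ∧ ∀ y ∈ X, ‖z - P z‖ ≤ ‖z - y‖)
    (f : Fin n → EuclideanSpace ℝ (Fin D) → ℝ)
    (g : Fin n → EuclideanSpace ℝ (Fin D) → EuclideanSpace ℝ (Fin D))
    (hfconv : ∀ j, ConvexOn ℝ Set.univ (f j))
    (hfgrad : ∀ j z, HasGradientAt (f j) (g j z) z)
    (hgbound : ∀ j, ∀ z ∈ X, ‖g j z‖ ≤ L)
    (hglip : ∀ j, ∀ z ∈ X, ∀ w ∈ X, ‖g j z - g j w‖ ≤ N * ‖z - w‖)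
    (α : ℕ → ℝ) (hαpos : ∀ k, 1 ≤ k → 0 < α k)
    (hαmono : ∀ k, 1 ≤ k → α (k + 1) ≤ α k)
    (B : ℕ → Matrix (Fin n) (Fin n) ℝ)
    (hBnn : ∀ k i j, 1 ≤ k → 0 ≤ B k i j)
    (hBrow : ∀ k i, 1 ≤ k → ∑ j, B k i j = 1)
    (hBcol : ∀ k j, 1 ≤ k → ∑ i, B k i j = 1)
    (Φ : ℕ → ℕ → Matrix (Fin n) (Fin n) ℝ)
    (hΦdiag : ∀ s, 1 ≤ s → Φ s s = B s)
    (hΦrec : ∀ k s, 1 ≤ s → s ≤ k → Φ (k + 1) s = B (k + 1) * Φ k s)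
    (θ β : ℝ) (hθ : 0 < θ) (hβ0 : 0 < β) (hβ1 : β < 1)
    (hΦbound : ∀ k s i j, 1 ≤ s → s ≤ k →
      |Φ k s i j - 1 / n| ≤ θ * β ^ (k - s + 1))
    (e : ℕ → Fin n → EuclideanSpace ℝ (Fin D))
    (hebound : ∀ k j, 1 ≤ k → ‖e k j‖ ≤ Δ)
    (hesum : ∀ k, 1 ≤ k → ∑ j, e k j = 0)
    (x : ℕ → Fin n → EuclideanSpace ℝ (Fin D))
    (hx1 : ∀ j, x 1 j ∈ X)
    (hupdate : ∀ k j, 1 ≤ k →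
      x (k + 1) j = P ((∑ i, B k j i • x k i) -
        α k • (g j ((∑ i, B k j i • x k i) + α k • e k j) - e k j)))
    (hαsq : Summable fun k => α (k + 1) ^ 2)
    : Summable fun k =>
        α (k + 1) * ⨆ j, ‖x (k + 1) j - (n : ℝ)⁻¹ • ∑ i, x (k + 1) i‖ :=
  stmt_17_general n D Δ hΔ X hXcompact hXconvex P hP f g hfconv hfgrad α hαpos hαmono B hBnn hBrow
    hBcol Φ hΦdiag hΦrec θ β hθ hβ0 hβ1 hΦbound e hebound x hx1 hupdate hαsq
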